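/- arXiv:1904.10249 — 2 statements merged into one kernel-verified Lean document; each statement's English description precedes it below -/
import Mathlib

section
/- In the lattice Z^{1,5} with form diag(1,-1,-1,-1,-1,-1), basis ℓ, e_1,...,e_5, and k = -3ℓ + e_1 + ... + e_5, the set of vectors e with e·e = -1 and e·k = -1 has exactly 16 elements. -/
/-!
Write `e = a ℓ + ∑ bᵢ eᵢ`. The two conditions say `∑ bᵢ = 1 - 3a` and `∑ bᵢ² = a² + 1`.
Cauchy–Schwarz, `(1 - 3a)² ≤ 5 (a² + 1)`, forces `0 ≤ a ≤ 2`. For integers `bᵢ² ∓ bᵢ ≥ 0`, and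
`∑ (bᵢ² - bᵢ) = a (a + 3)`, `∑ (bᵢ² + bᵢ) = (a - 1)(a - 2)`; one of these vanishes for
`a ∈ {0, 1, 2}`, so every `bᵢ ∈ {-1, 0, 1}`. What remains is a finite check on the
`3 · 3⁵` vectors of this box, which finds `eᵢ`, `ℓ - eᵢ - eⱼ` and `2ℓ - ∑ eᵢ`.
-/

/-- The intersection form of the odd unimodular lattice `Z^{1,5}` in the basis
`ℓ, e_1, …, e_5`, i.e. `diag(1,-1,-1,-1,-1,-1)`. -/
def bform (v w : Fin 6 → ℤ) : ℤ := v 0 * w 0 - ∑ i : Fin 5, v i.succ * w i.succ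

/-- The canonical class `k = -3ℓ + e_1 + ⋯ + e_5`. -/
def kvec : Fin 6 → ℤ := ![-3, 1, 1, 1, 1, 1]

open Finset

lemma bform_self (e : Fin 6 → ℤ) : bform e e = e 0 ^ 2 - ∑ i : Fin 5, e i.succ ^ 2 := by
  simp only [bform, sq]

lemma bform_kvec (e : Fin 6 → ℤ) : bform e kvec = -3 * e 0 - ∑ i : Fin 5, e i.succ := by
  have hk : ∀ i : Fin 5, kvec i.succ = 1 := by decide
  simp only [bform, hk, mul_one, show kvec 0 = -3 from rfl]
  ring

lemma mem_Icc_zero_two_of_sum {a : ℤ} {b : Fin 5 → ℤ} (hsum : ∑ i, b i = 1 - 3 * a)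
    (hsq : ∑ i, b i ^ 2 = a ^ 2 + 1) : a ∈ Icc 0 2 := by
  have hcs : (1 - 3 * a) ^ 2 ≤ 5 * (a ^ 2 + 1) := by
    simpa [hsum, hsq] using sq_sum_le_card_mul_sum_sq (s := univ) (f := b)
  rw [mem_Icc]
  constructor <;> nlinarith

lemma mem_Icc_neg_one_one_of_sum {a : ℤ} {b : Fin 5 → ℤ} (hsum : ∑ i, b i = 1 - 3 * a)
    (hsq : ∑ i, b i ^ 2 = a ^ 2 + 1) (i : Fin 5) : b i ∈ Icc (-1) 1 := by
  have hminus : b i ^ 2 - b i ≤ a * (a + 3) := by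
    calc b i ^ 2 - b i ≤ ∑ j, (b j ^ 2 - b j) :=
          single_le_sum (fun j _ => sub_nonneg.2 (Int.le_self_sq (b j))) (mem_univ i)
      _ = a * (a + 3) := by rw [sum_sub_distrib, hsum, hsq]; ring
  have hplus : b i ^ 2 + b i ≤ (a - 1) * (a - 2) := by
    calc b i ^ 2 + b i ≤ ∑ j, (b j ^ 2 + b j) :=
          single_le_sum (f := fun j => b j ^ 2 + b j)
            (fun j _ => by linarith [neg_sq (b j) ▸ Int.le_self_sq (-b j)]) (mem_univ i)
      _ = (a - 1) * (a - 2) := by rw [sum_add_distrib, hsum, hsq]; ring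
  obtain ⟨ha₀, ha₂⟩ := mem_Icc.1 (mem_Icc_zero_two_of_sum hsum hsq)
  rw [mem_Icc]
  interval_cases a <;> constructor <;> nlinarith

noncomputable def lineBox : Finset (Fin 6 → ℤ) :=
  Fintype.piFinset (Fin.cases (Icc 0 2) fun _ => Icc (-1) 1)

lemma mem_lineBox {e : Fin 6 → ℤ} (h₁ : bform e e = -1) (h₂ : bform e kvec = -1) :
    e ∈ lineBox := by
  have hsum : ∑ i : Fin 5, e i.succ = 1 - 3 * e 0 := by rw [bform_kvec] at h₂; linarith
  have hsq : ∑ i : Fin 5, e i.succ ^ 2 = e 0 ^ 2 + 1 := by rw [bform_self] at h₁; linarith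
  refine Fintype.mem_piFinset.2 fun i => Fin.cases ?_ (fun i => ?_) i
  · exact mem_Icc_zero_two_of_sum hsum hsq
  · exact mem_Icc_neg_one_one_of_sum hsum hsq i

/-- In `Z^{1,5}` with `k = -3ℓ + e_1 + ⋯ + e_5` there are exactly 16 vectors `e` with
`e·e = -1` and `e·k = -1` (the 16 lines on a degree 4 Del Pezzo surface). -/
theorem statement11 :
    Nat.card {e : Fin 6 → ℤ // bform e e = -1 ∧ bform e kvec = -1} = 16 := by
  have hline : ∀ e : Fin 6 → ℤ, bform e e = -1 ∧ bform e kvec = -1 ↔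
      e ∈ lineBox.filter fun e => bform e e = -1 ∧ bform e kvec = -1 := fun e => by
    rw [mem_filter]
    exact ⟨fun h => ⟨mem_lineBox h.1 h.2, h⟩, And.right⟩
  rw [Nat.card_congr (Equiv.subtypeEquivRight hline), Nat.card_eq_finsetCard]
  decide
end

section
/- In the lattice Z^{1,5} with k = -3ℓ + e_1 + ... + e_5, for f_1 = 2ℓ - e_1 - ... - e_5 and f_2 = ℓ (so f_1 + f_2 = -k), the sublattice ⟨f_1, f_2⟩^⊥ contains exactly 20 vectors α with α·α = -2, forming a root system of type A_4; while for f_1 = 2ℓ - e_1 - ... - e_5 + e_1 and f_2 = ℓ - e_1, the sublattice ⟨f_1, f_2⟩^⊥ contains exactly 24 vectors α with α·α = -2, forming a root system of type D_4. -/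
/-!
A root `α` orthogonal to `f₁, f₂` is pinned to the box `{-1, 0, 1}⁶`: orthogonality to `ℓ`
(resp. to `ℓ - e₁`) removes the positive part of `α · α`, leaving `∑ αᵢ² = 2` over the
remaining coordinates. In the `D₄` case `α₀` is recovered from `2 α₀ = -(α₂ + ⋯ + α₅)`,
and Cauchy–Schwarz bounds it by `α₀² ≤ 2`. The roots are then counted by enumerating the box.
-/

def ofTernary {ι : Type*} (g : ι → Fin 3) : ι → ℤ := fun i => (g i : ℤ) - 1

def equivTernaryOfAbsLeOne {ι : Type*} (P : (ι → ℤ) → Prop)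
    (hP : ∀ v, P v → ∀ i, |v i| ≤ 1) :
    {v : ι → ℤ // P v} ≃ {g : ι → Fin 3 // P (ofTernary g)} where
  toFun v := ⟨fun i => ⟨(v.1 i + 1).toNat, by have := abs_le.mp (hP v.1 v.2 i); omega⟩, by
    convert v.2
    funext i
    have := abs_le.mp (hP v.1 v.2 i)
    simp only [ofTernary]
    omega⟩
  invFun g := ⟨ofTernary g.1, g.2⟩
  left_inv v := by
    ext i
    have := abs_le.mp (hP v.1 v.2 i)
    simp only [ofTernary]
    omega
  right_inv g := by
    ext i
    simp only [ofTernary]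
    omega

theorem Int.abs_le_one_of_sq_le_two {x : ℤ} (h : x ^ 2 ≤ 2) : |x| ≤ 1 := by
  have : |x| < 2 := abs_lt_of_sq_lt_sq (by linarith) (by norm_num)
  omega

theorem abs_le_one_of_sum_sq_le_two {ι : Type*} [Fintype ι] {v : ι → ℤ}
    (h : ∑ i, v i ^ 2 ≤ 2) (i : ι) : |v i| ≤ 1 :=
  Int.abs_le_one_of_sq_le_two <|
    (Finset.single_le_sum (fun j _ => sq_nonneg (v j)) (Finset.mem_univ i)).trans h

theorem bform_eq (v w : Fin 6 → ℤ) :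
    bform v w = v 0 * w 0 - (v 1 * w 1 + v 2 * w 2 + v 3 * w 3 + v 4 * w 4 + v 5 * w 5) := by
  simp [bform, Fin.sum_univ_five]

theorem abs_le_one_of_root_perp_ell {α : Fin 6 → ℤ} (hℓ : bform α ![1, 0, 0, 0, 0, 0] = 0)
    (hα : bform α α = -2) (i : Fin 6) : |α i| ≤ 1 := by
  simp only [bform_eq] at hℓ hα
  simp only [Matrix.cons_val_zero, Matrix.cons_val, mul_one, mul_zero, add_zero, sub_zero] at hℓ
  apply abs_le_one_of_sum_sq_le_two _ i
  simp only [Fin.sum_univ_six]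
  nlinarith

theorem abs_le_one_of_root_perp_D4 {α : Fin 6 → ℤ} (hf₁ : bform α ![2, 0, -1, -1, -1, -1] = 0)
    (hf₂ : bform α ![1, -1, 0, 0, 0, 0] = 0) (hα : bform α α = -2) (i : Fin 6) : |α i| ≤ 1 := by
  simp only [bform_eq] at hf₁ hf₂ hα
  simp only [Matrix.cons_val_zero, Matrix.cons_val_one, Matrix.cons_val, mul_one, mul_zero,
    mul_neg, zero_add, add_zero, sub_neg_eq_add] at hf₁ hf₂
  have h1 : α 1 = -α 0 := by linarith
  have hsum : α 2 ^ 2 + α 3 ^ 2 + α 4 ^ 2 + α 5 ^ 2 = 2 := by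
    rw [h1] at hα
    linarith
  have hcs : (α 2 + α 3 + α 4 + α 5) ^ 2 ≤ 4 * (α 2 ^ 2 + α 3 ^ 2 + α 4 ^ 2 + α 5 ^ 2) := by
    nlinarith [sq_nonneg (α 2 - α 3), sq_nonneg (α 2 - α 4), sq_nonneg (α 2 - α 5),
      sq_nonneg (α 3 - α 4), sq_nonneg (α 3 - α 5), sq_nonneg (α 4 - α 5)]
  have h0 : α 0 ^ 2 ≤ 2 := by
    rw [show α 2 + α 3 + α 4 + α 5 = -(2 * α 0) by linarith, hsum] at hcs
    linarith
  apply Int.abs_le_one_of_sq_le_two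
  fin_cases i <;> simp only [Fin.zero_eta, Fin.mk_one, Fin.reduceFinMk]
  · exact h0
  · rwa [h1, neg_sq]
  all_goals linarith [sq_nonneg (α 2), sq_nonneg (α 3), sq_nonneg (α 4), sq_nonneg (α 5)]

/-- In `Z^{1,5}` with `k = -3ℓ + e_1 + ⋯ + e_5`: for `f_1 = 2ℓ - e_1 - ⋯ - e_5` and
`f_2 = ℓ`, the orthogonal complement `⟨f_1,f_2⟩^⊥` contains exactly 20 vectors of
square `-2` (a root system of type `A_4`); for `f_1 = 2ℓ - e_2 - e_3 - e_4 - e_5` and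
`f_2 = ℓ - e_1`, it contains exactly 24 vectors of square `-2` (type `D_4`). -/
theorem statement14 :
    Nat.card {α : Fin 6 → ℤ //
      bform α ![2, -1, -1, -1, -1, -1] = 0 ∧ bform α ![1, 0, 0, 0, 0, 0] = 0 ∧
      bform α α = -2} = 20 ∧
    Nat.card {α : Fin 6 → ℤ //
      bform α ![2, 0, -1, -1, -1, -1] = 0 ∧ bform α ![1, -1, 0, 0, 0, 0] = 0 ∧
      bform α α = -2} = 24 := by
  constructor
  · rw [Nat.card_congr <| equivTernaryOfAbsLeOne _ fun _ h =>
      abs_le_one_of_root_perp_ell h.2.1 h.2.2, Nat.card_eq_fintype_card]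
    decide
  · rw [Nat.card_congr <| equivTernaryOfAbsLeOne _ fun _ h =>
      abs_le_one_of_root_perp_D4 h.1 h.2.1 h.2.2, Nat.card_eq_fintype_card]
    decide
end
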